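/- Let G be a finite group, π a set of primes, and N a normal π-subgroup of G. Then Pr_π(G) ≤ Pr_π(G/N), where Pr_π(H) = |{(x,y) ∈ H_π × H_π : xy = yx}| / |H_π|² and H_π is the set of π-elements of H. -/

import Mathlib

/-!
Since `N` is a `π`-group, an element of `G` is a `π`-element exactly when its image in `G ⧸ N`
is one, so `G_π` is the full preimage of `(G ⧸ N)_π` and `|G_π| = |N| · |(G ⧸ N)_π|`.
Commuting pairs of `π`-elements map to commuting pairs of `π`-elements, and every fibre of
`G × G → (G ⧸ N) × (G ⧸ N)` has `|N|²` elements, so there are at most `|N|²` times as many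
such pairs in `G` as in `G ⧸ N`. The factors `|N|²` cancel in the ratio.
-/

open QuotientGroup

section PiElements

variable (π : Set ℕ) {M : Type*} [Monoid M]

def IsPiElement (g : M) : Prop :=
  ∀ q : ℕ, q.Prime → q ∣ orderOf g → q ∈ π

variable (M) in
def piElements : Set M :=
  {g | IsPiElement π g}

variable (M) in
def commutingPiPairs : Set (M × M) :=
  {z | IsPiElement π z.1 ∧ IsPiElement π z.2 ∧ Commute z.1 z.2}

variable (M) in
noncomputable def commutingPiProb : ℝ :=
  Nat.card (commutingPiPairs π M) / (Nat.card (piElements π M) : ℝ) ^ 2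

variable {π}

theorem IsPiElement.map {N : Type*} [Monoid N] (f : M →* N) {g : M} (hg : IsPiElement π g) :
    IsPiElement π (f g) :=
  fun q hq hdvd => hg q hq (hdvd.trans (orderOf_map_dvd f g))

theorem IsPiElement.of_pow {g : M} {m : ℕ} (hm : ∀ q : ℕ, q.Prime → q ∣ m → q ∈ π)
    (hgm : IsPiElement π (g ^ m)) : IsPiElement π g := by
  intro q hq hdvd
  have horder : orderOf g ∣ m * orderOf (g ^ m) :=
    orderOf_dvd_of_pow_eq_one (by rw [pow_mul, pow_orderOf_eq_one])
  rcases hq.dvd_mul.mp (hdvd.trans horder) with h | h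
  · exact hm q hq h
  · exact hgm q hq h

theorem mapsTo_prodMap_commutingPiPairs {N : Type*} [Monoid N] (f : M →* N) :
    Set.MapsTo (Prod.map f f) (commutingPiPairs π M) (commutingPiPairs π N) :=
  fun _ ⟨h₁, h₂, hcomm⟩ => ⟨h₁.map f, h₂.map f, hcomm.map f⟩

end PiElements

section Quotient

variable {G : Type*} [Group G]

theorem isPiElement_mk_iff {π : Set ℕ} {N : Subgroup G} [N.Normal]
    (hN : ∀ n ∈ N, IsPiElement π n) {g : G} :
    IsPiElement π (g : G ⧸ N) ↔ IsPiElement π g := by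
  refine ⟨fun hg => IsPiElement.of_pow hg (hN _ ?_), fun hg => hg.map (mk' N)⟩
  rw [← eq_one_iff, mk_pow, pow_orderOf_eq_one]

theorem piElements_eq_preimage_mk {π : Set ℕ} {N : Subgroup G} [N.Normal]
    (hN : ∀ n ∈ N, IsPiElement π n) :
    piElements π G = (mk : G → G ⧸ N) ⁻¹' piElements π (G ⧸ N) :=
  Set.ext fun _ => (isPiElement_mk_iff hN).symm

theorem card_preimage_prodMap_mk {H : Type*} [Group H] (A : Subgroup G) (B : Subgroup H)
    (t : Set ((G ⧸ A) × (H ⧸ B))) :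
    Nat.card (Prod.map mk mk ⁻¹' t : Set (G × H)) = Nat.card A * Nat.card B * Nat.card t := by
  have hmk : (Prod.map mk mk : G × H → (G ⧸ A) × (H ⧸ B)) = prodEquiv A B ∘ mk := rfl
  rw [hmk, Set.preimage_comp, card_preimage_mk,
    Nat.card_preimage_of_injective (prodEquiv A B).injective (by simp),
    Nat.card_congr (Subgroup.prodEquiv A B).toEquiv, Nat.card_prod]

theorem card_commutingPiPairs_le_quotient [Finite G] (π : Set ℕ) (N : Subgroup G) [N.Normal] :
    Nat.card (commutingPiPairs π G) ≤ Nat.card N ^ 2 * Nat.card (commutingPiPairs π (G ⧸ N)) :=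
  calc Nat.card (commutingPiPairs π G)
      ≤ Nat.card (Prod.map mk mk ⁻¹' commutingPiPairs π (G ⧸ N) : Set (G × G)) :=
        Nat.card_mono (Set.toFinite _) (mapsTo_prodMap_commutingPiPairs (mk' N)).subset_preimage
    _ = Nat.card N ^ 2 * Nat.card (commutingPiPairs π (G ⧸ N)) := by
        rw [card_preimage_prodMap_mk, sq]

end Quotient

theorem pr_pi_le_quotient_general {G : Type*} [Group G] [Finite G] (π : Set ℕ)
    (N : Subgroup G) [N.Normal]
    (hN : ∀ n ∈ N, ∀ q : ℕ, q.Prime → q ∣ orderOf n → q ∈ π) :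
    (Nat.card {z : G × G | (∀ q : ℕ, q.Prime → q ∣ orderOf z.1 → q ∈ π) ∧
        (∀ q : ℕ, q.Prime → q ∣ orderOf z.2 → q ∈ π) ∧ z.1 * z.2 = z.2 * z.1} : ℝ)
        / (Nat.card {g : G | ∀ q : ℕ, q.Prime → q ∣ orderOf g → q ∈ π} : ℝ) ^ 2
      ≤ (Nat.card {z : (G ⧸ N) × (G ⧸ N) | (∀ q : ℕ, q.Prime → q ∣ orderOf z.1 → q ∈ π) ∧
            (∀ q : ℕ, q.Prime → q ∣ orderOf z.2 → q ∈ π) ∧ z.1 * z.2 = z.2 * z.1} : ℝ)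
        / (Nat.card {g : G ⧸ N | ∀ q : ℕ, q.Prime → q ∣ orderOf g → q ∈ π} : ℝ) ^ 2 := by
  change commutingPiProb π G ≤ commutingPiProb π (G ⧸ N)
  have hcardS : Nat.card (piElements π G) = Nat.card N * Nat.card (piElements π (G ⧸ N)) := by
    rw [piElements_eq_preimage_mk hN, card_preimage_mk]
  have hcardC : (Nat.card (commutingPiPairs π G) : ℝ)
      ≤ (Nat.card N : ℝ) ^ 2 * Nat.card (commutingPiPairs π (G ⧸ N)) :=
    mod_cast card_commutingPiPairs_le_quotient π N
  have hN0 : (Nat.card N : ℝ) ^ 2 ≠ 0 := pow_ne_zero 2 (Nat.cast_ne_zero.mpr Nat.card_pos.ne')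
  unfold commutingPiProb
  calc (Nat.card (commutingPiPairs π G) : ℝ) / (Nat.card (piElements π G) : ℝ) ^ 2
      ≤ (Nat.card N : ℝ) ^ 2 * Nat.card (commutingPiPairs π (G ⧸ N))
          / ((Nat.card N : ℝ) ^ 2 * (Nat.card (piElements π (G ⧸ N)) : ℝ) ^ 2) := by
        rw [hcardS, Nat.cast_mul, mul_pow]
        gcongr
    _ = _ := mul_div_mul_left _ _ hN0

/-- For a normal `π`-subgroup `N` of a finite group `G`,
the commuting probability of `π`-elements satisfies `Pr_π(G) ≤ Pr_π(G/N)`. -/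
theorem pr_pi_le_quotient {G : Type*} [Group G] [Finite G] (π : Set ℕ)
    (hπ : ∀ q ∈ π, Nat.Prime q) (N : Subgroup G) [N.Normal]
    (hN : ∀ n ∈ N, ∀ q : ℕ, q.Prime → q ∣ orderOf n → q ∈ π) :
    (Nat.card {z : G × G | (∀ q : ℕ, q.Prime → q ∣ orderOf z.1 → q ∈ π) ∧
        (∀ q : ℕ, q.Prime → q ∣ orderOf z.2 → q ∈ π) ∧ z.1 * z.2 = z.2 * z.1} : ℝ)
        / (Nat.card {g : G | ∀ q : ℕ, q.Prime → q ∣ orderOf g → q ∈ π} : ℝ) ^ 2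
      ≤ (Nat.card {z : (G ⧸ N) × (G ⧸ N) | (∀ q : ℕ, q.Prime → q ∣ orderOf z.1 → q ∈ π) ∧
            (∀ q : ℕ, q.Prime → q ∣ orderOf z.2 → q ∈ π) ∧ z.1 * z.2 = z.2 * z.1} : ℝ)
        / (Nat.card {g : G ⧸ N | ∀ q : ℕ, q.Prime → q ∣ orderOf g → q ∈ π} : ℝ) ^ 2 :=
  pr_pi_le_quotient_general π N hN
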